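/- Lower bound for the geometric action by twice the barrier: let U : ℝ^d → ℝ be continuously differentiable and let φ : [0,1] → ℝ^d be continuously differentiable. Then I_g[φ] = ∫₀¹ ‖∇U(φ(s))‖·‖φ'(s)‖ ds ≥ 2·max_{s∈[0,1]} U(φ(s)) − U(φ(0)) − U(φ(1)). -/

import Mathlib

open Set Filter MeasureTheory

/-!
Along the path, `f = U ∘ φ` has derivative `⟪∇U(φ), φ'⟫`, whose absolute value is at most the
integrand `‖∇U(φ)‖ ‖φ'‖` by Cauchy–Schwarz. Hence the integrand dominates the total variation of
`f`: for every `t ∈ [0, 1]`, climbing from `f 0` to `f t` and descending from `f t` to `f 1`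
costs at least `(f t - f 0) + (f t - f 1)`.
-/

theorem HasGradientAt.comp_hasDerivAt {F : Type*} [NormedAddCommGroup F] [InnerProductSpace ℝ F]
    [CompleteSpace F] {f : F → ℝ} {γ : ℝ → F} {g γ' : F} {t : ℝ}
    (hf : HasGradientAt f g (γ t)) (hγ : HasDerivAt γ γ' t) :
    HasDerivAt (fun s => f (γ s)) (inner ℝ g γ') t := by
  have h := hf.hasFDerivAt.comp_hasDerivAt t hγ
  simp only [InnerProductSpace.toDual_apply_apply] at h
  exact h

theorem norm_sub_le_integral_of_norm_deriv_le {E : Type*} [NormedAddCommGroup E]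
    [NormedSpace ℝ E] [CompleteSpace E] {f f' : ℝ → E} {g : ℝ → ℝ} {a b : ℝ} (hab : a ≤ b)
    (hf : ∀ x ∈ Icc a b, HasDerivAt f (f' x) x) (hf' : IntervalIntegrable f' volume a b)
    (hg : IntervalIntegrable g volume a b) (hbound : ∀ x ∈ Icc a b, ‖f' x‖ ≤ g x) :
    ‖f b - f a‖ ≤ ∫ x in a..b, g x := by
  rw [← intervalIntegral.integral_eq_sub_of_hasDerivAt (by rwa [uIcc_of_le hab]) hf']
  exact intervalIntegral.norm_integral_le_of_norm_le hab
    (Eventually.of_forall fun x hx => hbound x (Ioc_subset_Icc_self hx)) hg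

section TotalVariation

variable {f f' g : ℝ → ℝ} {a b : ℝ}

theorem two_mul_sub_sub_le_integral_of_abs_deriv_le {t : ℝ} (hat : a ≤ t) (htb : t ≤ b)
    (hf : ∀ x ∈ Icc a b, HasDerivAt f (f' x) x) (hf' : IntervalIntegrable f' volume a b)
    (hg : IntervalIntegrable g volume a b) (hbound : ∀ x ∈ Icc a b, |f' x| ≤ g x) :
    2 * f t - f a - f b ≤ ∫ x in a..b, g x := by
  have ht : t ∈ uIcc a b := by rw [uIcc_of_le (hat.trans htb)]; exact ⟨hat, htb⟩
  have hleft : uIcc a t ⊆ uIcc a b := uIcc_subset_uIcc_left ht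
  have hright : uIcc t b ⊆ uIcc a b := uIcc_subset_uIcc_right ht
  have hclimb : |f t - f a| ≤ ∫ x in a..t, g x :=
    norm_sub_le_integral_of_norm_deriv_le hat (fun x hx => hf x ⟨hx.1, hx.2.trans htb⟩)
      (hf'.mono_set hleft) (hg.mono_set hleft) fun x hx => hbound x ⟨hx.1, hx.2.trans htb⟩
  have hdescend : |f b - f t| ≤ ∫ x in t..b, g x :=
    norm_sub_le_integral_of_norm_deriv_le htb (fun x hx => hf x ⟨hat.trans hx.1, hx.2⟩)
      (hf'.mono_set hright) (hg.mono_set hright) fun x hx => hbound x ⟨hat.trans hx.1, hx.2⟩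
  rw [← intervalIntegral.integral_add_adjacent_intervals (hg.mono_set hleft) (hg.mono_set hright)]
  linarith [le_abs_self (f t - f a), neg_abs_le (f b - f t)]

theorem two_mul_iSup_sub_sub_le_integral_of_abs_deriv_le (hab : a ≤ b)
    (hf : ∀ x ∈ Icc a b, HasDerivAt f (f' x) x) (hf' : IntervalIntegrable f' volume a b)
    (hg : IntervalIntegrable g volume a b) (hbound : ∀ x ∈ Icc a b, |f' x| ≤ g x) :
    2 * (⨆ t : Icc a b, f t) - f a - f b ≤ ∫ x in a..b, g x := by
  have : Nonempty (Icc a b) := ⟨⟨a, left_mem_Icc.2 hab⟩⟩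
  have hsup : (⨆ t : Icc a b, f t) ≤ ((∫ x in a..b, g x) + f a + f b) / 2 :=
    ciSup_le fun t => by
      linarith [two_mul_sub_sub_le_integral_of_abs_deriv_le t.2.1 t.2.2 hf hf' hg hbound]
  linarith

end TotalVariation

/-- Lower bound for the geometric action by twice the barrier:
`∫₀¹ ‖∇U(φ)‖‖φ'‖ ds ≥ 2·max_{s∈[0,1]} U(φ(s)) − U(φ(0)) − U(φ(1))`. -/
theorem scalar_work_ge_twice_barrier {d : ℕ}
    (U : EuclideanSpace ℝ (Fin d) → ℝ)
    (gradU : EuclideanSpace ℝ (Fin d) → EuclideanSpace ℝ (Fin d))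
    (hgrad : ∀ x, HasGradientAt U (gradU x) x)
    (hgradc : Continuous gradU)
    (φ φ' : ℝ → EuclideanSpace ℝ (Fin d))
    (hφ : ∀ s ∈ Icc (0:ℝ) 1, HasDerivAt φ (φ' s) s)
    (hφ'c : ContinuousOn φ' (Icc 0 1)) :
    (∫ s in (0:ℝ)..1, ‖gradU (φ s)‖ * ‖φ' s‖) ≥
      2 * (⨆ s : Icc (0:ℝ) 1, U (φ s)) - U (φ 0) - U (φ 1) := by
  have hgradφ : ContinuousOn (fun s => gradU (φ s)) (uIcc 0 1) := by
    rw [uIcc_of_le zero_le_one]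
    exact hgradc.comp_continuousOn fun s hs => (hφ s hs).continuousAt.continuousWithinAt
  rw [← uIcc_of_le zero_le_one] at hφ'c
  exact two_mul_iSup_sub_sub_le_integral_of_abs_deriv_le zero_le_one
    (fun s hs => (hgrad (φ s)).comp_hasDerivAt (hφ s hs))
    (hgradφ.inner hφ'c).intervalIntegrable (hgradφ.norm.mul hφ'c.norm).intervalIntegrable
    fun s _ => abs_real_inner_le_norm _ _
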